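/- Let L be a bounded distributive lattice, A an n×n matrix over L, and 𝟏 = (1,…,1) the all-ones row vector in L^n. Then the sequence 𝟏, 𝟏A, 𝟏A², … is decreasing and eventually constant: there exists ℓ such that 𝟏A^k = 𝟏A^ℓ for all k ≥ ℓ; moreover z := 𝟏A^ℓ satisfies zA = z, and every x ∈ L^n with xA = x satisfies x ≤ z (i.e., the limit is the greatest solution of the fixed-point equation xA = x). -/
import Mathlib

/-- Multiplication of a row vector `x ∈ Lⁿ` by an `n × n` matrix over a bounded lattice:
`(x A) j = ⋁ i, (x i ⊓ A i j)`. -/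
def vecMatMul {L : Type*} [Lattice L] [BoundedOrder L] {n : ℕ}
    (x : Fin n → L) (A : Matrix (Fin n) (Fin n) L) : Fin n → L :=
  fun j => Finset.univ.sup fun i => x i ⊓ A i j

/-- The iterated products `x, xA, xA², …`: `vecIter A x k = x Aᵏ`. -/
def vecIter {L : Type*} [Lattice L] [BoundedOrder L] {n : ℕ}
    (A : Matrix (Fin n) (Fin n) L) (x : Fin n → L) : ℕ → (Fin n → L)
  | 0 => x
  | k + 1 => vecMatMul (vecIter A x k) A

section Aux
variable {L : Type*} [DistribLattice L] [BoundedOrder L] {n : ℕ}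

lemma vecMatMul_mono (A : Matrix (Fin n) (Fin n) L) {x y : Fin n → L} (h : x ≤ y) :
    vecMatMul x A ≤ vecMatMul y A := fun j =>
  Finset.sup_mono_fun fun i _ => inf_le_inf_right _ (h i)

lemma vecIter_succ_le (A : Matrix (Fin n) (Fin n) L) :
    ∀ k, vecIter A (fun _ => (⊤ : L)) (k + 1) ≤ vecIter A (fun _ => ⊤) k
  | 0 => fun _ => le_top
  | k + 1 => vecMatMul_mono A (vecIter_succ_le A k)

lemma vecIter_anti (A : Matrix (Fin n) (Fin n) L) {k m : ℕ} (h : k ≤ m) :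
    vecIter A (fun _ => (⊤ : L)) m ≤ vecIter A (fun _ => ⊤) k := by
  induction h with
  | refl => exact le_refl _
  | step h ih => exact le_trans (vecIter_succ_le A _) ih

/-- extend a finite path by constant `j`. -/
def extPath {n k : ℕ} (w : Fin k → Fin n) (j : Fin n) : ℕ → Fin n :=
  fun i => if h : i < k then w ⟨i, h⟩ else j

/-- weight of the first `k` edges of infinite path `v`. -/
def pathWt (A : Matrix (Fin n) (Fin n) L) (v : ℕ → Fin n) (k : ℕ) : L :=
  (Finset.range k).inf fun i => A (v i) (v (i + 1))

lemma pathWt_le (A : Matrix (Fin n) (Fin n) L) (v : ℕ → Fin n) :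
    ∀ k, pathWt A v k ≤ vecIter A (fun _ => ⊤) k (v k)
  | 0 => le_top
  | k + 1 => by
    have h1 : pathWt A v (k + 1) = A (v k) (v (k + 1)) ⊓ pathWt A v k := by
      simp [pathWt, Finset.range_add_one]
    have h2 : pathWt A v k ⊓ A (v k) (v (k + 1)) ≤
        vecIter A (fun _ => ⊤) k (v k) ⊓ A (v k) (v (k + 1)) :=
      inf_le_inf_right _ (pathWt_le A v k)
    calc pathWt A v (k + 1) = pathWt A v k ⊓ A (v k) (v (k + 1)) := by rw [h1, inf_comm]
      _ ≤ vecIter A (fun _ => ⊤) k (v k) ⊓ A (v k) (v (k + 1)) := h2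
      _ ≤ vecIter A (fun _ => ⊤) (k + 1) (v (k + 1)) :=
        Finset.le_sup (f := fun i => vecIter A (fun _ => ⊤) k i ⊓ A i (v (k + 1)))
          (Finset.mem_univ (v k))

lemma extPath_snoc {k : ℕ} (w : Fin k → Fin n) (i0 j : Fin n) {m : ℕ} (hm : m ≤ k) :
    extPath (Fin.snoc w i0) j m = extPath w i0 m := by
  rcases lt_or_eq_of_le hm with h | h
  · have h' : m < k + 1 := Nat.lt_succ_of_lt h
    have e : (Fin.snoc w i0 : Fin (k + 1) → Fin n) ⟨m, h'⟩ = w ⟨m, h⟩ := by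
      have hc : (⟨m, h'⟩ : Fin (k + 1)) = Fin.castSucc ⟨m, h⟩ := rfl
      rw [hc, Fin.snoc_castSucc]
    simp only [extPath, dif_pos h', dif_pos h, e]
  · subst h
    have h' : m < m + 1 := Nat.lt_succ_self m
    have e : (Fin.snoc w i0 : Fin (m + 1) → Fin n) ⟨m, h'⟩ = i0 := by
      have hc : (⟨m, h'⟩ : Fin (m + 1)) = Fin.last m := rfl
      rw [hc, Fin.snoc_last]
    simp only [extPath, dif_pos h', dif_neg (lt_irrefl m), e]

lemma pathWt_snoc (A : Matrix (Fin n) (Fin n) L) {k : ℕ} (w : Fin k → Fin n) (i0 j : Fin n) :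
    pathWt A (extPath (Fin.snoc w i0) j) (k + 1) = pathWt A (extPath w i0) k ⊓ A i0 j := by
  unfold pathWt
  rw [Finset.range_add_one, Finset.inf_insert]
  have hk : extPath (Fin.snoc w i0) j k = i0 := by
    rw [extPath_snoc w i0 j (le_refl k)]
    simp [extPath]
  have hk1 : extPath (Fin.snoc w i0) j (k + 1) = j := by
    simp [extPath]
  rw [hk, hk1, inf_comm]
  congr 1
  apply Finset.inf_congr rfl
  intro m hm
  rw [Finset.mem_range] at hm
  rw [extPath_snoc w i0 j (le_of_lt hm), extPath_snoc w i0 j hm]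

lemma le_sup_pathWt (A : Matrix (Fin n) (Fin n) L) :
    ∀ (k : ℕ) (j : Fin n), vecIter A (fun _ => ⊤) k j ≤
      (Finset.univ : Finset (Fin k → Fin n)).sup fun w => pathWt A (extPath w j) k
  | 0, j => by
    have h1 : pathWt A (extPath (fun i : Fin 0 => i.elim0) j) 0 = ⊤ := by simp [pathWt]
    calc vecIter A (fun _ => (⊤ : L)) 0 j = ⊤ := rfl
      _ = pathWt A (extPath (fun i : Fin 0 => i.elim0) j) 0 := h1.symm
      _ ≤ _ := Finset.le_sup (f := fun w : Fin 0 → Fin n => pathWt A (extPath w j) 0)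
          (Finset.mem_univ _)
  | k + 1, j => by
    show (Finset.univ.sup fun i => vecIter A (fun _ => ⊤) k i ⊓ A i j) ≤ _
    apply Finset.sup_le
    intro i _
    calc vecIter A (fun _ => ⊤) k i ⊓ A i j
        ≤ ((Finset.univ : Finset (Fin k → Fin n)).sup fun w => pathWt A (extPath w i) k) ⊓ A i j :=
          inf_le_inf_right _ (le_sup_pathWt A k i)
      _ = (Finset.univ : Finset (Fin k → Fin n)).sup fun w => pathWt A (extPath w i) k ⊓ A i j :=
          Finset.sup_inf_distrib_right _ _ _
      _ ≤ _ := by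
          apply Finset.sup_le
          intro w _
          rw [← pathWt_snoc A w i j]
          exact Finset.le_sup (f := fun w' : Fin (k + 1) → Fin n => pathWt A (extPath w' j) (k + 1))
            (Finset.mem_univ ((Fin.snoc w i : Fin (k + 1) → Fin n)))

lemma key_le (A : Matrix (Fin n) (Fin n) L) :
    vecIter A (fun _ => (⊤ : L)) n ≤ vecIter A (fun _ => ⊤) (n + 1) := by
  intro j
  refine (le_sup_pathWt A n j).trans (Finset.sup_le ?_)
  intro w _
  set v := extPath w j with hv
  -- pigeonhole
  obtain ⟨a', b', hne, heq⟩ :=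
    Fintype.exists_ne_map_eq_of_card_lt (fun i : Fin (n + 1) => v i.val)
      (by simp)
  -- wlog a < b
  obtain ⟨a, b, hab, hvab, hbn⟩ : ∃ a b : ℕ, a < b ∧ v a = v b ∧ b ≤ n := by
    rcases lt_or_gt_of_ne hne with h | h
    · exact ⟨a', b', h, heq, Nat.lt_succ_iff.mp b'.isLt⟩
    · exact ⟨b', a', h, heq.symm, Nat.lt_succ_iff.mp a'.isLt⟩
  set c := b - a with hc
  have hc1 : 1 ≤ c := Nat.le_sub_of_add_le (by omega)
  have hcb : c ≤ b := Nat.sub_le _ _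
  set v' : ℕ → Fin n := fun i => if i < b then v i else v (i - c) with hv'
  have hvn : v n = j := by simp [hv, extPath]
  have hend : v' (n + c) = j := by
    have h1 : ¬ n + c < b := by omega
    have h2 : n + c - c = n := by omega
    simp only [hv', h1, if_false, h2, hvn]
  have hle : pathWt A v n ≤ pathWt A v' (n + c) := by
    apply Finset.le_inf
    intro i hi
    rw [Finset.mem_range] at hi
    rcases lt_or_ge i b with h | h
    · have e1 : v' i = v i := by simp [hv', h]
      have e2 : v' (i + 1) = v (i + 1) := by
        rcases lt_or_ge (i + 1) b with h2 | h2
        · simp [hv', h2]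
        · have hb : i + 1 = b := by omega
          have : (i + 1) - c = a := by omega
          simp only [hv', if_neg (by omega : ¬ i + 1 < b), this]
          rw [hvab, hb]
      rw [e1, e2]
      exact Finset.inf_le (Finset.mem_range.mpr (by omega : i < n))
    · have e1 : v' i = v (i - c) := if_neg (Nat.not_lt.mpr h)
      have e2 : v' (i + 1) = v (i + 1 - c) := if_neg (by omega)
      have e3 : i + 1 - c = (i - c) + 1 := by omega
      rw [e1, e2, e3]
      exact Finset.inf_le (Finset.mem_range.mpr (by omega : i - c < n))
  calc pathWt A v n ≤ pathWt A v' (n + c) := hle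
    _ ≤ vecIter A (fun _ => ⊤) (n + c) (v' (n + c)) := pathWt_le A v' (n + c)
    _ = vecIter A (fun _ => ⊤) (n + c) j := by rw [hend]
    _ ≤ vecIter A (fun _ => ⊤) (n + 1) j := vecIter_anti A (by omega : n + 1 ≤ n + c) j


lemma vecIter_stab (A : Matrix (Fin n) (Fin n) L) :
    ∀ k, n ≤ k → vecIter A (fun _ => (⊤ : L)) k = vecIter A (fun _ => ⊤) n := by
  intro k hk
  induction k, hk using Nat.le_induction with
  | base => rfl
  | succ k hk ih =>
    have hstep : vecIter A (fun _ => (⊤ : L)) (n + 1) = vecIter A (fun _ => ⊤) n :=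
      le_antisymm (vecIter_succ_le A n) (key_le A)
    calc vecIter A (fun _ => (⊤ : L)) (k + 1) = vecMatMul (vecIter A (fun _ => ⊤) k) A := rfl
      _ = vecMatMul (vecIter A (fun _ => ⊤) n) A := by rw [ih]
      _ = vecIter A (fun _ => ⊤) (n + 1) := rfl
      _ = vecIter A (fun _ => ⊤) n := hstep

lemma vecIter_mono_base (A : Matrix (Fin n) (Fin n) L) {x y : Fin n → L} (h : x ≤ y) :
    ∀ k, vecIter A x k ≤ vecIter A y k
  | 0 => h
  | k + 1 => vecMatMul_mono A (vecIter_mono_base A h k)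

lemma vecIter_fixed (A : Matrix (Fin n) (Fin n) L) {x : Fin n → L} (hx : vecMatMul x A = x) :
    ∀ k, vecIter A x k = x
  | 0 => rfl
  | k + 1 => by
    show vecMatMul (vecIter A x k) A = x
    rw [vecIter_fixed A hx k, hx]

end Aux

/-- For a matrix `A` over a bounded distributive lattice and the all-ones vector `𝟏`, the
sequence `𝟏, 𝟏A, 𝟏A², …` is decreasing and eventually constant, and its limit `z = 𝟏Aˡ`
is the greatest solution of the fixed-point equation `xA = x`. -/
theorem one_matPow_converges_to_greatest_fixed_point {L : Type*} [DistribLattice L]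
    [BoundedOrder L] {n : ℕ} (A : Matrix (Fin n) (Fin n) L) :
    (∀ k : ℕ, vecIter A (fun _ => ⊤) (k + 1) ≤ vecIter A (fun _ => ⊤) k) ∧
    ∃ ℓ : ℕ,
      (∀ k : ℕ, ℓ ≤ k → vecIter A (fun _ => ⊤) k = vecIter A (fun _ => ⊤) ℓ) ∧
      vecMatMul (vecIter A (fun _ => ⊤) ℓ) A = vecIter A (fun _ => ⊤) ℓ ∧
      ∀ x : Fin n → L, vecMatMul x A = x → x ≤ vecIter A (fun _ => ⊤) ℓ := by
  refine ⟨vecIter_succ_le A, n, vecIter_stab A, ?_, ?_⟩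
  · show vecIter A (fun _ => ⊤) (n + 1) = vecIter A (fun _ => ⊤) n
    exact vecIter_stab A (n + 1) (Nat.le_succ n)
  · intro x hx
    calc x = vecIter A x n := (vecIter_fixed A hx n).symm
      _ ≤ vecIter A (fun _ => ⊤) n := vecIter_mono_base A (fun i => le_top) n
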